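/- arXiv:math/9902162 — 7 statements merged into one kernel-verified Lean document; each statement's English description precedes it below -/
import Mathlib

section
/- For every integer k ≥ 1 and every real x with 0 ≤ x < 1, one has (1 - x)^{2k-1} ∑_{r=0}^∞ C(k+r-1, r)² x^r = ∑_{r=0}^{k-1} C(k-1, r)² x^r. In particular, taking x = 1/p at each prime p, the coefficient a_k = ∏_p ( (1 - 1/p)^{k²} ∑_{r=0}^∞ d_k(p^r)² p^{-r} ) equals ∏_p ( (1 - 1/p)^{(k-1)²} ∑_{r=0}^{k-1} C(k-1, r)² p^{-r} ). -/
/-- The `k`-th divisor function `d_k`, the `k`-fold Dirichlet convolution of the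
constant function `1`. -/
noncomputable def dk (k : ℕ) : ArithmeticFunction ℕ := ArithmeticFunction.zeta ^ k

/-- The arithmetic factor `a_k = ∏_p (1 - 1/p)^{k²} ∑_{r=0}^∞ d_k(p^r)² p^{-r}`. -/
noncomputable def aCG (k : ℕ) : ℝ :=
  ∏' p : Nat.Primes, ((1 - 1 / (p : ℝ)) ^ (k ^ 2) *
    ∑' r : ℕ, (dk k ((p : ℕ) ^ r) : ℝ) ^ 2 / (p : ℝ) ^ r)

/-!
Put `k = m + 1`. The first identity says that `∑ₙ C(n+m,m)² xⁿ = P(x) / (1 - x)^(2m+1)` with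
`P(x) = ∑ᵣ C(m,r)² xʳ`. Multiplying `P` by the negative binomial series
`(1 - x)^-(2m+1) = ∑ₛ C(s+2m,2m) xˢ` (a Cauchy product with a polynomial), this is the
coefficient identity `∑ᵣ C(m,r)² C(n-r+2m,2m) = C(n+m,m)²`, which follows from Vandermonde's
convolution (three times) and the trinomial identity `C(N,k) C(k,s) = C(N,s) C(N-s,k-s)`.
At `x = 1/p` this identifies the Euler factors, since `d_{m+1}(pʳ) = C(r+m,m)` and
`(m+1)² = m² + (2m+1)`.
-/

open Finset

namespace Nat

theorem sum_range_choose_mul_choose (d m : ℕ) {N : ℕ} (hd : d ≤ N) :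
    ∑ r ∈ range (N + 1), d.choose r * m.choose r = (d + m).choose d := by
  have hvdm : (m + d).choose d = ∑ r ∈ range (d + 1), d.choose r * m.choose r := by
    rw [add_choose_eq, Nat.sum_antidiagonal_eq_sum_range_succ fun i j => m.choose i * d.choose j]
    refine sum_congr rfl fun r hr => ?_
    rw [mul_comm, choose_symm (mem_range_succ_iff.1 hr)]
  rw [add_comm d m, hvdm]
  refine (sum_subset (range_subset_range.2 (by omega)) fun r _ hr => ?_).symm
  rw [choose_eq_zero_of_lt (by simpa using hr), zero_mul]

theorem choose_sq_mul_choose_eq_sum (m : ℕ) {n r : ℕ} (hr : r ≤ n) :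
    m.choose r ^ 2 * (n - r + 2 * m).choose (2 * m) = ∑ a ∈ range (n + 1),
      (n + m).choose a * m.choose (n - a) * ((n - a).choose r * m.choose r) := by
  rcases lt_or_ge m r with hmr | hrm
  · simp [choose_eq_zero_of_lt hmr]
  have hsplit : (n - r + 2 * m).choose (2 * m) =
      ∑ a ∈ range (n - r + 1), (n + m).choose a * (m - r).choose (n - r - a) := by
    rw [← choose_symm_add, show n - r + 2 * m = (n + m) + (m - r) by omega, add_choose_eq,
      Nat.sum_antidiagonal_eq_sum_range_succ fun i j => (n + m).choose i * (m - r).choose j]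
  rw [sq, hsplit, mul_sum, ← sum_subset (range_subset_range.2 (by omega : n - r + 1 ≤ n + 1))]
  · refine sum_congr rfl fun a ha => ?_
    have hmul := choose_mul (n := m) (show r ≤ n - a by have := mem_range_succ_iff.1 ha; omega)
    rw [show n - a - r = n - r - a by omega] at hmul
    calc m.choose r * m.choose r * ((n + m).choose a * (m - r).choose (n - r - a))
        = (n + m).choose a * m.choose r * (m.choose r * (m - r).choose (n - r - a)) := by ring
      _ = _ := by rw [← hmul]; ring
  · intro a ha ha'
    have : n - a < r := by
      rw [mem_range] at ha ha'
      omega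
    rw [choose_eq_zero_of_lt this, zero_mul, mul_zero]

theorem sum_range_choose_sq_mul_choose (m n : ℕ) :
    ∑ r ∈ range (n + 1), m.choose r ^ 2 * (n - r + 2 * m).choose (2 * m) =
      (n + m).choose m ^ 2 := by
  have hinner : ∀ a ∈ range (n + 1),
      ∑ r ∈ range (n + 1),
          (n + m).choose a * m.choose (n - a) * ((n - a).choose r * m.choose r) =
        (n + m).choose m * (n.choose a * m.choose (n - a)) := by
    intro a ha
    have han : n - a + m = n + m - a := by have := mem_range_succ_iff.1 ha; omega
    have hm := choose_mul (n := n + m) (Nat.le_add_left m a)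
    have hA := choose_mul (n := n + m) (Nat.le_add_right a m)
    rw [Nat.add_sub_cancel, Nat.add_sub_cancel] at hm
    rw [Nat.add_sub_cancel_left, choose_symm_add, hm] at hA
    rw [← mul_sum, sum_range_choose_mul_choose _ _ (Nat.sub_le n a), choose_symm_add, han,
      mul_right_comm, ← hA, mul_assoc]
  rw [sum_congr rfl fun r hr => choose_sq_mul_choose_eq_sum m (mem_range_succ_iff.1 hr), sum_comm,
    sum_congr rfl hinner, ← mul_sum,
    ← Nat.sum_antidiagonal_eq_sum_range_succ fun i j => n.choose i * m.choose j,
    ← add_choose_eq, sq, choose_symm_add]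

end Nat

theorem dk_succ_apply_prime_pow (j : ℕ) {p : ℕ} (hp : p.Prime) (r : ℕ) :
    dk (j + 1) (p ^ r) = (r + j).choose j := by
  induction j generalizing r with
  | zero => simp [dk, ArithmeticFunction.zeta_apply, hp.ne_zero]
  | succ j ih =>
    rw [dk, pow_succ, ← dk, ArithmeticFunction.mul_zeta_apply, Nat.sum_divisors_prime_pow hp]
    simp only [ih]
    rw [Nat.sum_range_add_choose, add_assoc]

section GeneratingFunction

variable {𝕜 : Type*} [NormedField 𝕜]

theorem hasSum_choose_add_sq_mul_pow (m : ℕ) {x : 𝕜} (hx : ‖x‖ < 1) :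
    HasSum (fun n => ((n + m).choose m : 𝕜) ^ 2 * x ^ n)
      ((∑ r ∈ range (m + 1), (m.choose r : 𝕜) ^ 2 * x ^ r) / (1 - x) ^ (2 * m + 1)) := by
  set f : ℕ → 𝕜 := fun r => (m.choose r : 𝕜) ^ 2 * x ^ r
  set g : ℕ → 𝕜 := fun s => ((s + 2 * m).choose (2 * m) : 𝕜) * x ^ s
  have hf_zero : ∀ r ∉ range (m + 1), f r = 0 := fun r hr => by
    simp [f, Nat.choose_eq_zero_of_lt (by simpa using hr : m < r)]
  have hf_norm : Summable fun r => ‖f r‖ :=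
    summable_of_ne_finset_zero fun r hr => by rw [hf_zero r hr, norm_zero]
  have hg : HasSum g (1 / (1 - x) ^ (2 * m + 1)) := hasSum_choose_mul_geometric_of_norm_lt_one _ hx
  have hg_norm : Summable fun s => ‖g s‖ := by
    refine Summable.of_nonneg_of_le (fun _ => norm_nonneg _) (fun s => ?_)
      (summable_choose_mul_geometric_of_norm_lt_one (2 * m) (r := ‖x‖) (by rwa [norm_norm]))
    simpa [g, norm_pow] using
      mul_le_mul_of_nonneg_right (Nat.norm_cast_le (α := 𝕜) _) (pow_nonneg (norm_nonneg x) s)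
  have hcoeff : ∀ n,
      ∑ r ∈ range (n + 1), f r * g (n - r) = ((n + m).choose m : 𝕜) ^ 2 * x ^ n := by
    intro n
    rw [← Nat.cast_pow, ← Nat.sum_range_choose_sq_mul_choose, Nat.cast_sum, sum_mul]
    refine sum_congr rfl fun r hr => ?_
    rw [← Nat.add_sub_of_le (mem_range_succ_iff.1 hr), pow_add, Nat.add_sub_cancel_left]
    push_cast [f, g]
    ring
  have hprod := hasSum_sum_range_mul_of_summable_norm' hf_norm
    (summable_of_ne_finset_zero hf_zero) hg_norm hg.summable
  rw [tsum_eq_sum hf_zero, hg.tsum_eq, mul_one_div] at hprod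
  exact hprod.congr_fun fun n => (hcoeff n).symm

theorem one_sub_pow_mul_tsum_choose_add_sq (m : ℕ) {x : 𝕜} (hx : ‖x‖ < 1) :
    (1 - x) ^ (2 * m + 1) * ∑' n, ((n + m).choose m : 𝕜) ^ 2 * x ^ n =
      ∑ r ∈ range (m + 1), (m.choose r : 𝕜) ^ 2 * x ^ r := by
  have hx1 : 1 - x ≠ 0 := by
    rw [sub_ne_zero]
    rintro rfl
    simp at hx
  rw [(hasSum_choose_add_sq_mul_pow m hx).tsum_eq, mul_div_cancel₀ _ (pow_ne_zero _ hx1)]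

end GeneratingFunction

theorem eulerFactor_dk_succ_eq (m : ℕ) {p : ℕ} (hp : p.Prime) :
    (1 - 1 / (p : ℝ)) ^ ((m + 1) ^ 2) *
        ∑' r : ℕ, (dk (m + 1) (p ^ r) : ℝ) ^ 2 / (p : ℝ) ^ r =
      (1 - 1 / (p : ℝ)) ^ (m ^ 2) *
        ∑ r ∈ range (m + 1), (m.choose r : ℝ) ^ 2 / (p : ℝ) ^ r := by
  have hx : ‖(p : ℝ)⁻¹‖ < 1 := by
    rw [norm_inv, Real.norm_natCast, inv_lt_one₀ (by exact_mod_cast hp.pos)]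
    exact_mod_cast hp.one_lt
  simp only [dk_succ_apply_prime_pow m hp, div_eq_mul_inv, one_mul, ← inv_pow]
  rw [show (m + 1) ^ 2 = m ^ 2 + (2 * m + 1) by ring, pow_add, mul_assoc,
    one_sub_pow_mul_tsum_choose_add_sq m hx]

/-- For `k ≥ 1` and `0 ≤ x < 1`:
`(1 - x)^{2k-1} ∑_{r=0}^∞ C(k+r-1,r)² x^r = ∑_{r=0}^{k-1} C(k-1,r)² x^r`,
and consequently `a_k = ∏_p (1 - 1/p)^{(k-1)²} ∑_{r=0}^{k-1} C(k-1,r)² p^{-r}`. -/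
theorem aCG_eq_finite_product (k : ℕ) (hk : 1 ≤ k) :
    (∀ x : ℝ, 0 ≤ x → x < 1 →
      (1 - x) ^ (2 * k - 1) * ∑' r : ℕ, ((k + r - 1).choose r : ℝ) ^ 2 * x ^ r =
        ∑ r ∈ Finset.range k, ((k - 1).choose r : ℝ) ^ 2 * x ^ r) ∧
    aCG k = ∏' p : Nat.Primes,
      ((1 - 1 / (p : ℝ)) ^ ((k - 1) ^ 2) *
        ∑ r ∈ Finset.range k, ((k - 1).choose r : ℝ) ^ 2 / (p : ℝ) ^ r) := by
  obtain ⟨m, rfl⟩ := Nat.exists_eq_add_of_le' hk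
  have hchoose : ∀ r, (m + 1 + r - 1).choose r = (r + m).choose m := fun r => by
    rw [show m + 1 + r - 1 = r + m by omega, Nat.choose_symm_add]
  simp only [hchoose, Nat.add_sub_cancel, show 2 * (m + 1) - 1 = 2 * m + 1 by omega]
  refine ⟨fun x hx0 hx1 => one_sub_pow_mul_tsum_choose_add_sq m ?_, tprod_congr fun p => ?_⟩
  · rwa [Real.norm_of_nonneg hx0]
  · exact eulerFactor_dk_succ_eq m p.prop
end

section
/- For every integer k ≥ 1, the product over all primes p > 2k² of the factors (1 - 1/p)^{(k-1)²} ∑_{r=0}^{k-1} C(k-1, r)² p^{-r} converges and is at most 1. -/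
/-- A product of real factors in `[0,1]` is multipliable: the partial products form
an antitone net bounded below by `0`, hence converge to their infimum. -/
lemma hasProd_ciInf_of_nonneg_of_le_one {ι : Type*} {f : ι → ℝ}
    (h0 : ∀ i, 0 ≤ f i) (h1 : ∀ i, f i ≤ 1) :
    HasProd f (⨅ s : Finset ι, ∏ i ∈ s, f i) := by
  classical
  have hanti : Antitone (fun s : Finset ι => ∏ i ∈ s, f i) := by
    intro s t hst
    have := Finset.prod_sdiff (f := f) hst
    calc ∏ i ∈ t, f i = (∏ i ∈ t \ s, f i) * ∏ i ∈ s, f i := this.symm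
      _ ≤ 1 * ∏ i ∈ s, f i := by
          gcongr
          · exact Finset.prod_nonneg fun i _ => h0 i
          · exact Finset.prod_le_one (fun i _ => h0 i) (fun i _ => h1 i)
      _ = ∏ i ∈ s, f i := one_mul _
  exact tendsto_atTop_ciInf hanti ⟨0, by rintro x ⟨s, rfl⟩; exact Finset.prod_nonneg fun i _ => h0 i⟩

lemma multipliable_of_nonneg_of_le_one {ι : Type*} {f : ι → ℝ}
    (h0 : ∀ i, 0 ≤ f i) (h1 : ∀ i, f i ≤ 1) : Multipliable f :=
  ⟨_, hasProd_ciInf_of_nonneg_of_le_one h0 h1⟩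

lemma tprod_le_one_of_nonneg_of_le_one {ι : Type*} {f : ι → ℝ}
    (h0 : ∀ i, 0 ≤ f i) (h1 : ∀ i, f i ≤ 1) : ∏' i, f i ≤ 1 := by
  rw [(hasProd_ciInf_of_nonneg_of_le_one h0 h1).tprod_eq]
  have : (⨅ s : Finset ι, ∏ i ∈ s, f i) ≤ ∏ i ∈ (∅ : Finset ι), f i :=
    ciInf_le ⟨0, by rintro x ⟨s, rfl⟩; exact Finset.prod_nonneg fun i _ => h0 i⟩ ∅
  simpa using this

/-- Key numeric bound: `C(m,r)² · r! ≤ m^(2r)`. -/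
lemma choose_sq_mul_factorial_le (m r : ℕ) :
    (m.choose r) ^ 2 * r.factorial ≤ m ^ (2 * r) := by
  have h1 : m.choose r * r.factorial ≤ m ^ r := by
    rw [mul_comm, ← Nat.descFactorial_eq_factorial_mul_choose]
    exact Nat.descFactorial_le_pow m r
  have h2 : m.choose r ≤ m ^ r := by
    calc m.choose r ≤ m.choose r * r.factorial :=
          Nat.le_mul_of_pos_right _ r.factorial_pos
      _ ≤ m ^ r := h1
  calc (m.choose r) ^ 2 * r.factorial = m.choose r * (m.choose r * r.factorial) := by ring
    _ ≤ m ^ r * m ^ r := Nat.mul_le_mul h2 h1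
    _ = m ^ (2 * r) := by rw [← pow_add]; ring_nf

/-- Each factor of the product lies in `[0, 1]`. -/
lemma factor_le_one (k : ℕ) {p : ℕ} (hp : p.Prime) :
    (1 - 1 / (p : ℝ)) ^ ((k - 1) ^ 2) *
      ∑ r ∈ Finset.range k, ((k - 1).choose r : ℝ) ^ 2 / (p : ℝ) ^ r ≤ 1 := by
  set m := k - 1 with hm
  have hp2 : (2 : ℝ) ≤ (p : ℝ) := by exact_mod_cast hp.two_le
  have hp0 : (0 : ℝ) < (p : ℝ) := by linarith
  set x : ℝ := 1 / (p : ℝ) with hxdef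
  have hx0 : 0 < x := by positivity
  have hx1 : x ≤ 1 / 2 := by
    rw [hxdef, div_le_div_iff₀ hp0 (by norm_num)]
    linarith
  have h1x : 0 ≤ 1 - x := by linarith
  -- step 3 : (1-x)^(m²) ≤ exp(-x)^(m²) = exp(-(m² x))
  have hA : (1 - x) ^ (m ^ 2) ≤ Real.exp (-((m : ℝ) ^ 2 * x)) := by
    have h : 1 - x ≤ Real.exp (-x) := by
      have := Real.add_one_le_exp (-x); linarith
    calc (1 - x) ^ (m ^ 2) ≤ Real.exp (-x) ^ (m ^ 2) := pow_le_pow_left₀ h1x h _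
      _ = Real.exp (-((m : ℝ) ^ 2 * x)) := by
          rw [← Real.exp_nat_mul]; push_cast; ring_nf
  -- step 1 + 2 : the sum is at most exp(m² x)
  have hS : (∑ r ∈ Finset.range k, ((m.choose r : ℝ)) ^ 2 / (p : ℝ) ^ r)
      ≤ Real.exp ((m : ℝ) ^ 2 * x) := by
    have hterm : ∀ r ∈ Finset.range k,
        ((m.choose r : ℝ)) ^ 2 / (p : ℝ) ^ r ≤ ((m : ℝ) ^ 2 * x) ^ r / r.factorial := by
      intro r _
      have hnat : ((m.choose r : ℝ)) ^ 2 * (r.factorial : ℝ) ≤ (m : ℝ) ^ (2 * r) := by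
        exact_mod_cast choose_sq_mul_factorial_le m r
      have hfac : (0 : ℝ) < (r.factorial : ℝ) := by positivity
      have hpr : (0 : ℝ) < (p : ℝ) ^ r := by positivity
      rw [div_le_div_iff₀ hpr (by positivity)]
      have : ((m : ℝ) ^ 2 * x) ^ r = (m : ℝ) ^ (2 * r) / (p : ℝ) ^ r := by
        rw [hxdef, mul_pow, ← pow_mul, div_pow, one_pow]
        ring
      rw [this, div_mul_eq_mul_div, le_div_iff₀ hpr]
      calc ((m.choose r : ℝ)) ^ 2 * (r.factorial : ℝ) * (p : ℝ) ^ r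
          = (((m.choose r : ℝ)) ^ 2 * (r.factorial : ℝ)) * (p : ℝ) ^ r := by ring
        _ ≤ (m : ℝ) ^ (2 * r) * (p : ℝ) ^ r := by gcongr
    calc (∑ r ∈ Finset.range k, ((m.choose r : ℝ)) ^ 2 / (p : ℝ) ^ r)
        ≤ ∑ r ∈ Finset.range k, ((m : ℝ) ^ 2 * x) ^ r / r.factorial :=
          Finset.sum_le_sum hterm
      _ ≤ Real.exp ((m : ℝ) ^ 2 * x) := Real.sum_le_exp_of_nonneg (by positivity) k
  have hSnn : 0 ≤ ∑ r ∈ Finset.range k, ((m.choose r : ℝ)) ^ 2 / (p : ℝ) ^ r :=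
    Finset.sum_nonneg fun r _ => by positivity
  calc (1 - x) ^ (m ^ 2) * ∑ r ∈ Finset.range k, ((m.choose r : ℝ)) ^ 2 / (p : ℝ) ^ r
      ≤ Real.exp (-((m : ℝ) ^ 2 * x)) * Real.exp ((m : ℝ) ^ 2 * x) :=
        mul_le_mul hA hS hSnn (Real.exp_nonneg _)
    _ = 1 := by rw [← Real.exp_add]; simp

lemma factor_nonneg (k : ℕ) {p : ℕ} (hp : p.Prime) :
    0 ≤ (1 - 1 / (p : ℝ)) ^ ((k - 1) ^ 2) *
      ∑ r ∈ Finset.range k, ((k - 1).choose r : ℝ) ^ 2 / (p : ℝ) ^ r := by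
  have hp2 : (2 : ℝ) ≤ (p : ℝ) := by exact_mod_cast hp.two_le
  have h1x : 0 ≤ 1 - 1 / (p : ℝ) := by
    rw [sub_nonneg, div_le_one (by linarith)]; linarith
  exact mul_nonneg (pow_nonneg h1x _)
    (Finset.sum_nonneg fun r _ => by positivity)

/-- For every integer `k ≥ 1`, the product over all primes `p > 2k²` of
`(1 - 1/p)^{(k-1)²} ∑_{r=0}^{k-1} C(k-1,r)² p^{-r}` converges and is at most `1`. -/
theorem prod_large_primes_le_one (k : ℕ) (hk : 1 ≤ k) :
    Multipliable (fun p : {p : Nat.Primes // 2 * k ^ 2 < (p : ℕ)} =>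
      (1 - 1 / ((p : ℕ) : ℝ)) ^ ((k - 1) ^ 2) *
        ∑ r ∈ Finset.range k, ((k - 1).choose r : ℝ) ^ 2 / ((p : ℕ) : ℝ) ^ r) ∧
    (∏' p : {p : Nat.Primes // 2 * k ^ 2 < (p : ℕ)},
      (1 - 1 / ((p : ℕ) : ℝ)) ^ ((k - 1) ^ 2) *
        ∑ r ∈ Finset.range k, ((k - 1).choose r : ℝ) ^ 2 / ((p : ℕ) : ℝ) ^ r) ≤ 1 := by
  constructor
  · exact multipliable_of_nonneg_of_le_one
      (fun p : {p : Nat.Primes // 2 * k ^ 2 < (p : ℕ)} => factor_nonneg k p.1.2)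
      (fun p : {p : Nat.Primes // 2 * k ^ 2 < (p : ℕ)} => factor_le_one k p.1.2)
  · exact tprod_le_one_of_nonneg_of_le_one
      (fun p : {p : Nat.Primes // 2 * k ^ 2 < (p : ℕ)} => factor_nonneg k p.1.2)
      fun p : {p : Nat.Primes // 2 * k ^ 2 < (p : ℕ)} => factor_le_one k p.1.2
end

section
/- Let k ≥ 1 be an integer and let r = ∏_p p^{α_p} be a positive integer. For all complex s with Re(s) > 1, ∑_{n=1}^∞ d_k(rn) n^{-s} = g_k(s, r) ζ(s)^k, where ζ is the Riemann zeta function and g_k(s, r) = ∏_{p | r} ( (1 - p^{-s})^k ∑_{j=0}^∞ d_k(p^{j+α_p}) p^{-js} ). -/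
/-- The local factor `g_k(s, r) = ∏_{p | r} (1 - p^{-s})^k ∑_{j≥0} d_k(p^{j+α_p}) p^{-js}`,
where `r = ∏_p p^{α_p}`. -/
noncomputable def gk (k : ℕ) (s : ℂ) (r : ℕ) : ℂ :=
  ∏ p ∈ r.primeFactors,
    ((1 - (p : ℂ) ^ (-s)) ^ k *
      ∑' j : ℕ, (dk k (p ^ (j + r.factorization p)) : ℂ) * (p : ℂ) ^ (-(j : ℂ) * s))

open ArithmeticFunction Finset

section Aux

lemma dk_mult (k : ℕ) : (dk k).IsMultiplicative := by
  induction k with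
  | zero => simpa [dk] using ArithmeticFunction.isMultiplicative_one
  | succ n ih => rw [dk, pow_succ]; exact ih.mul isMultiplicative_zeta

lemma dk_succ (k : ℕ) : dk (k + 1) = ArithmeticFunction.zeta * dk k := by
  rw [dk, pow_succ', dk]

lemma dk_pos {k n : ℕ} (hk : 1 ≤ k) (hn : n ≠ 0) : 0 < dk k n := by
  induction k, hk using Nat.le_induction with
  | base => simp [dk, ArithmeticFunction.zeta_apply, hn]
  | succ k hk ih =>
      rw [dk_succ, zeta_mul_apply]
      exact lt_of_lt_of_le ih (Finset.single_le_sum (fun i _ => Nat.zero_le _)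
        (Nat.mem_divisors_self n hn))

lemma dk_succ_pp {p : ℕ} (hp : p.Prime) (k e : ℕ) :
    dk (k + 1) (p ^ e) = ∑ i ∈ Finset.range (e + 1), dk k (p ^ i) := by
  rw [dk_succ, zeta_mul_apply, Nat.sum_divisors_prime_pow hp]

lemma dk_eq_prod_superset (k : ℕ) {N : ℕ} (hN : N ≠ 0) {S : Finset ℕ}
    (hS : N.primeFactors ⊆ S) :
    dk k N = ∏ p ∈ S, dk k (p ^ N.factorization p) := by
  rw [(dk_mult k).multiplicative_factorization (dk k) hN]
  rw [Finsupp.prod]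
  refine Finset.prod_subset (by rwa [Nat.support_factorization]) ?_
  intro p _ hp
  rw [Finsupp.notMem_support_iff.mp hp, pow_zero, (dk_mult k).map_one]

lemma dk_quad (k : ℕ) {r m n : ℕ} (hr : r ≠ 0) (hm : m ≠ 0) (hn : n ≠ 0)
    (h : Nat.Coprime m n) :
    dk k (r * m * n) * dk k r = dk k (r * m) * dk k (r * n) := by
  have hrm : r * m ≠ 0 := mul_ne_zero hr hm
  have hrmn : r * m * n ≠ 0 := mul_ne_zero hrm hn
  have hrn : r * n ≠ 0 := mul_ne_zero hr hn
  set S := (r * m * n).primeFactors with hSdef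
  have hSrmn : (r * m * n).primeFactors ⊆ S := subset_rfl
  have hSr : r.primeFactors ⊆ S := by
    rw [hSdef, Nat.primeFactors_mul hrm hn, Nat.primeFactors_mul hr hm]
    intro p hp; simp_all [Finset.mem_union]
  have hSrm : (r * m).primeFactors ⊆ S := by
    rw [hSdef, Nat.primeFactors_mul hrm hn]
    exact Finset.subset_union_left
  have hSrn : (r * n).primeFactors ⊆ S := by
    rw [hSdef, Nat.primeFactors_mul hrm hn, Nat.primeFactors_mul hr hm]
    intro p hp
    rw [Nat.primeFactors_mul hr hn, Finset.mem_union] at hp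
    rcases hp with hp | hp
    · exact Finset.mem_union_left _ (Finset.mem_union_left _ hp)
    · exact Finset.mem_union_right _ hp
  rw [dk_eq_prod_superset k hrmn hSrmn, dk_eq_prod_superset k hr hSr,
    dk_eq_prod_superset k hrm hSrm, dk_eq_prod_superset k hrn hSrn,
    ← Finset.prod_mul_distrib, ← Finset.prod_mul_distrib]
  refine Finset.prod_congr rfl fun p _ => ?_
  have hfrmn : (r * m * n).factorization p
      = r.factorization p + m.factorization p + n.factorization p := by
    rw [Nat.factorization_mul hrm hn, Nat.factorization_mul hr hm]; simp
  have hfrm : (r * m).factorization p = r.factorization p + m.factorization p := by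
    rw [Nat.factorization_mul hr hm]; simp
  have hfrn : (r * n).factorization p = r.factorization p + n.factorization p := by
    rw [Nat.factorization_mul hr hn]; simp
  rw [hfrmn, hfrm, hfrn]
  have hbc : m.factorization p = 0 ∨ n.factorization p = 0 := by
    by_contra hcon
    push_neg at hcon
    have h1 : p ∣ m := Nat.dvd_of_factorization_pos hcon.1
    have h2 : p ∣ n := Nat.dvd_of_factorization_pos hcon.2
    have : p ∣ Nat.gcd m n := Nat.dvd_gcd h1 h2
    rw [Nat.Coprime.gcd_eq_one h] at this
    have hp1 : p = 1 := Nat.eq_one_of_dvd_one this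
    exact hcon.1 (by
      rw [hp1]
      simpa using Nat.factorization_eq_zero_of_non_prime m Nat.not_prime_one)
  rcases hbc with hb | hb <;> rw [hb] <;> ring_nf

lemma dk_antidiagonal {p : ℕ} (hp : p.Prime) (k : ℕ) (x : ℂ) (n : ℕ) :
    ∑ kl ∈ Finset.HasAntidiagonal.antidiagonal n, ((dk k (p ^ kl.1) : ℂ) * x ^ kl.1) * x ^ kl.2
      = (dk (k + 1) (p ^ n) : ℂ) * x ^ n := by
  rw [Finset.Nat.sum_antidiagonal_eq_sum_range_succ
    (fun i j => ((dk k (p ^ i) : ℂ) * x ^ i) * x ^ j) n]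
  rw [dk_succ_pp hp k n, Nat.cast_sum, Finset.sum_mul]
  refine Finset.sum_congr rfl fun i hi => ?_
  rw [Finset.mem_range] at hi
  rw [mul_assoc, ← pow_add]
  congr 2
  omega

lemma geom_norm_summable {x : ℂ} (hx : ‖x‖ < 1) :
    Summable fun e : ℕ => ‖x ^ e‖ := by
  simpa [norm_pow] using summable_geometric_of_lt_one (norm_nonneg x) hx

lemma dk_norm_summable (k : ℕ) {p : ℕ} (hp : p.Prime) {x : ℂ} (hx : ‖x‖ < 1) :
    Summable fun e : ℕ => ‖(dk k (p ^ e) : ℂ) * x ^ e‖ := by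
  induction k with
  | zero =>
    refine summable_of_ne_finset_zero (s := {0}) fun e he => ?_
    have he0 : e ≠ 0 := by simpa using he
    have : p ^ e ≠ 1 := Nat.one_lt_pow he0 hp.one_lt |>.ne'
    simp [dk, ArithmeticFunction.one_apply, this, hp.ne_one, he0]
  | succ k ih =>
    have := summable_norm_sum_mul_antidiagonal_of_summable_norm ih (geom_norm_summable hx)
    simpa only [dk_antidiagonal hp k x] using this

lemma dk_tsum_pp (k : ℕ) {p : ℕ} (hp : p.Prime) {x : ℂ} (hx : ‖x‖ < 1) :
    ∑' e : ℕ, (dk k (p ^ e) : ℂ) * x ^ e = ((1 - x)⁻¹) ^ k := by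
  induction k with
  | zero =>
    rw [pow_zero]
    have hfun : (fun e : ℕ => (dk 0 (p ^ e) : ℂ) * x ^ e)
        = fun e : ℕ => if e = 0 then (1 : ℂ) else 0 := by
      funext e
      rcases Nat.eq_zero_or_pos e with he | he
      · simp [he, dk]
      · have : p ^ e ≠ 1 := Nat.one_lt_pow (by omega) hp.one_lt |>.ne'
        have he0 : e ≠ 0 := by omega
        simp [dk, ArithmeticFunction.one_apply, this, hp.ne_one, he0]
    rw [hfun, tsum_ite_eq]
  | succ k ih =>
    have h1 := tsum_mul_tsum_eq_tsum_sum_antidiagonal_of_summable_norm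
      (dk_norm_summable k hp hx) (geom_norm_summable hx)
    rw [ih, tsum_geometric_of_norm_lt_one hx] at h1
    rw [pow_succ]
    rw [h1]
    exact tsum_congr fun n => (dk_antidiagonal hp k x n).symm

lemma dk_LSeriesSummable (k : ℕ) (hk : 1 ≤ k) {s : ℂ} (hs : 1 < s.re) :
    LSeriesSummable (fun n => (dk k n : ℂ)) s := by
  induction k, hk using Nat.le_induction with
  | base =>
    have := ArithmeticFunction.LSeriesSummable_zeta_iff.mpr hs
    refine this.congr fun n => ?_
    simp [dk]
  | succ k hk ih =>
    have hz := ArithmeticFunction.LSeriesSummable_zeta_iff.mpr hs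
    have := ArithmeticFunction.LSeriesSummable_mul
      (f := (ArithmeticFunction.zeta : ArithmeticFunction ℕ))
      (g := ((dk k : ArithmeticFunction ℕ) : ArithmeticFunction ℂ)) (s := s) ?_ ?_
    · refine this.congr fun n => ?_
      rw [dk_succ]
      rw [show ((↑ArithmeticFunction.zeta : ArithmeticFunction ℂ) * ↑(dk k) : ArithmeticFunction ℂ)
          = ((ArithmeticFunction.zeta * dk k : ArithmeticFunction ℕ) : ArithmeticFunction ℂ) from
        (ArithmeticFunction.natCoe_mul).symm]
      simp [ArithmeticFunction.natCoe_apply]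
    · exact hz.congr fun n => by simp [ArithmeticFunction.natCoe_apply]
    · exact ih.congr fun n => by simp [ArithmeticFunction.natCoe_apply]

lemma big_summable (k : ℕ) (hk : 1 ≤ k) {r : ℕ} (hr : r ≠ 0) {s : ℂ} (hs : 1 < s.re) :
    Summable fun n : ℕ => ‖(dk k (r * n) : ℂ) * (n : ℂ) ^ (-s)‖ := by
  have hL := (dk_LSeriesSummable k hk hs).norm
  have hinj : Function.Injective (fun n : ℕ => r * n) :=
    fun a b h => by simpa [Nat.mul_left_cancel_iff (Nat.pos_of_ne_zero hr)] using h
  have h1 : Summable fun n : ℕ => ‖LSeries.term (fun n => (dk k n : ℂ)) s (r * n)‖ :=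
    hL.comp_injective hinj
  have h2 := h1.mul_left ((r : ℝ) ^ s.re)
  refine h2.congr fun n => ?_
  rcases Nat.eq_zero_or_pos n with hn | hn
  · simp [hn, LSeries.term]
  · have hrn : r * n ≠ 0 := by positivity
    rw [LSeries.term_of_ne_zero hrn]
    rw [norm_mul, norm_div]
    have e1 : ‖((r * n : ℕ) : ℂ) ^ s‖ = ((r * n : ℕ) : ℝ) ^ s.re :=
      Complex.norm_natCast_cpow_of_pos (by positivity) s
    have e2 : ‖(n : ℂ) ^ (-s)‖ = (n : ℝ) ^ (-s.re) := by
      simpa using Complex.norm_natCast_cpow_of_pos hn (-s)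
    rw [e1, e2]
    have e3 : ((r * n : ℕ) : ℝ) = (r : ℝ) * (n : ℝ) := by push_cast; ring
    rw [e3, Real.mul_rpow (by positivity) (by positivity), Real.rpow_neg (by positivity)]
    have hrpos : (0:ℝ) < (r : ℝ) ^ s.re := Real.rpow_pos_of_pos (by positivity) _
    have hnpos : (0:ℝ) < (n : ℝ) ^ s.re := Real.rpow_pos_of_pos (by positivity) _
    field_simp

lemma HasProd.pow_const {ι M : Type*} [CommMonoid M] [TopologicalSpace M] [ContinuousMul M]
    {f : ι → M} {a : M} (h : HasProd f a) (k : ℕ) :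
    HasProd (fun i => f i ^ k) (a ^ k) := by
  induction k with
  | zero => simpa using hasProd_one
  | succ k ih => simpa [pow_succ] using ih.mul h

end Aux

/-- For `Re(s) > 1`, `∑_{n≥1} d_k(rn) n^{-s} = g_k(s, r) ζ(s)^k`. -/
theorem tsum_dk_mul_eq_gk_mul_zeta_pow (k : ℕ) (hk : 1 ≤ k) (r : ℕ) (hr : 1 ≤ r)
    (s : ℂ) (hs : 1 < s.re) :
    ∑' n : ℕ, (dk k (r * n) : ℂ) * (n : ℂ) ^ (-s) = gk k s r * riemannZeta s ^ k := by
  have hr0 : r ≠ 0 := by omega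
  have hD0 : (dk k r : ℂ) ≠ 0 := by
    exact_mod_cast Nat.cast_ne_zero.mpr (dk_pos hk hr0).ne'
  set G : ℕ → ℂ := fun n => (dk k (r * n) : ℂ) * (n : ℂ) ^ (-s) / (dk k r : ℂ) with hGdef
  -- basic facts about p^{-s}
  have hxnorm : ∀ p : ℕ, p.Prime → ‖(p : ℂ) ^ (-s)‖ < 1 := by
    intro p hp
    rw [Complex.norm_natCast_cpow_of_pos hp.pos]
    have h1 : (1 : ℝ) < (p : ℝ) := by exact_mod_cast hp.one_lt
    have h2 : (-s).re < 0 := by simp; linarith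
    exact Real.rpow_lt_one_of_one_lt_of_neg h1 h2
  have h1x : ∀ p : ℕ, p.Prime → (1 : ℂ) - (p : ℂ) ^ (-s) ≠ 0 := by
    intro p hp
    refine sub_ne_zero.mpr fun h => ?_
    have := hxnorm p hp
    rw [← h] at this
    simp at this
  -- G at prime powers
  have hGp : ∀ p : ℕ, p.Prime → ∀ e : ℕ,
      G (p ^ e) = (dk k (p ^ (e + r.factorization p)) : ℂ) * ((p : ℂ) ^ (-s)) ^ e
        / (dk k (p ^ r.factorization p) : ℂ) := by
    intro p hp e
    set α := r.factorization p with hα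
    set m := r / p ^ α with hmdef
    have hm : p ^ α * m = r := Nat.ordProj_mul_ordCompl_eq_self r p
    have hpm : ¬ p ∣ m := Nat.not_dvd_ordCompl hp hr0
    have hm0 : m ≠ 0 := by
      intro h; rw [h, mul_zero] at hm; exact hr0 hm.symm
    have hcop : Nat.Coprime (p ^ (α + e)) m :=
      Nat.Coprime.pow_left _ ((Nat.Prime.coprime_iff_not_dvd hp).mpr hpm)
    have hcopα : Nat.Coprime (p ^ α) m :=
      Nat.Coprime.pow_left _ ((Nat.Prime.coprime_iff_not_dvd hp).mpr hpm)
    have h1 : r * p ^ e = p ^ (α + e) * m := by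
      rw [← hm, pow_add]; ring
    have h2 : dk k (r * p ^ e) = dk k (p ^ (α + e)) * dk k m := by
      rw [h1, (dk_mult k).map_mul_of_coprime hcop]
    have h3 : dk k r = dk k (p ^ α) * dk k m := by
      rw [← hm, (dk_mult k).map_mul_of_coprime hcopα]
    have hcast : ((p ^ e : ℕ) : ℂ) ^ (-s) = ((p : ℂ) ^ (-s)) ^ e := by
      push_cast
      rw [← Complex.natCast_cpow_natCast_mul p e (-s), Complex.cpow_nat_mul]
    have hdm : (dk k m : ℂ) ≠ 0 := Nat.cast_ne_zero.mpr (dk_pos hk hm0).ne'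
    have hdpα : (dk k (p ^ α) : ℂ) ≠ 0 :=
      Nat.cast_ne_zero.mpr (dk_pos hk (pow_ne_zero _ hp.pos.ne')).ne'
    simp only [hGdef]
    rw [h2, h3, hcast, add_comm α e]
    push_cast
    field_simp
  -- Euler product hypotheses
  have hG1 : G 1 = 1 := by
    simp only [hGdef, mul_one, Nat.cast_one, Complex.one_cpow]
    exact div_self hD0
  have hG0 : G 0 = 0 := by
    simp [hGdef]
  have hGmul : ∀ {m n : ℕ}, Nat.Coprime m n → G (m * n) = G m * G n := by
    intro m n h
    rcases Nat.eq_zero_or_pos m with hm | hm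
    · subst hm
      have hn1 : n = 1 := Nat.coprime_zero_left n |>.mp h
      subst hn1
      rw [zero_mul, hG1, hG0, zero_mul]
    rcases Nat.eq_zero_or_pos n with hn | hn
    · subst hn
      have hm1 : m = 1 := Nat.coprime_zero_right m |>.mp h
      subst hm1
      rw [mul_zero, hG1, hG0, one_mul]
    have hm0 : m ≠ 0 := hm.ne'
    have hn0 : n ≠ 0 := hn.ne'
    have key := dk_quad k hr0 hm0 hn0 h
    have keyC : (dk k (r * m * n) : ℂ) * (dk k r : ℂ)
        = (dk k (r * m) : ℂ) * (dk k (r * n) : ℂ) := by exact_mod_cast key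
    have hcpow : ((m * n : ℕ) : ℂ) ^ (-s) = (m : ℂ) ^ (-s) * (n : ℂ) ^ (-s) := by
      push_cast
      exact Complex.natCast_mul_natCast_cpow m n (-s)
    simp only [hGdef]
    rw [show r * (m * n) = r * m * n from (mul_assoc r m n).symm, hcpow]
    field_simp
    linear_combination ((m : ℂ) ^ (-s) * (n : ℂ) ^ (-s)) * keyC
  have hGsum : Summable fun n => ‖G n‖ := by
    have := (big_summable k hk hr0 hs).div_const ‖(dk k r : ℂ)‖
    refine this.congr fun n => ?_
    simp only [hGdef]
    rw [norm_div]
  have hEuler := EulerProduct.eulerProduct_hasProd hG1 (fun {m n} h => hGmul h) hGsum hG0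
  -- local sums
  have hT : ∀ p : ℕ, p.Prime →
      ∑' e : ℕ, G (p ^ e)
        = (∑' e : ℕ, (dk k (p ^ (e + r.factorization p)) : ℂ) * ((p : ℂ) ^ (-s)) ^ e)
          / (dk k (p ^ r.factorization p) : ℂ) := by
    intro p hp
    rw [← tsum_div_const]
    exact tsum_congr fun e => hGp p hp e
  have hTout : ∀ p : ℕ, p.Prime → p ∉ r.primeFactors →
      ∑' e : ℕ, G (p ^ e) = ((1 - (p : ℂ) ^ (-s))⁻¹) ^ k := by
    intro p hp hmem
    have hα : r.factorization p = 0 := by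
      rw [← Nat.support_factorization] at hmem
      exact Finsupp.notMem_support_iff.mp hmem
    rw [hT p hp, hα]
    simp only [add_zero, pow_zero]
    rw [(dk_mult k).map_one, Nat.cast_one, div_one]
    exact dk_tsum_pp k hp (hxnorm p hp)
  -- the finite part
  set F : ℕ → ℂ := fun p => (1 - (p : ℂ) ^ (-s)) ^ k * (∑' e : ℕ, G (p ^ e)) with hFdef
  set c : Nat.Primes → ℂ :=
    fun p => if (p : ℕ) ∈ r.primeFactors then F (p : ℕ) else 1 with hcdef
  set P' : Finset Nat.Primes :=
    r.primeFactors.attach.map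
      ⟨fun q => ⟨q.1, Nat.prime_of_mem_primeFactors q.2⟩,
        fun a b hab => Subtype.ext (Subtype.mk_eq_mk.mp hab)⟩ with hP'def
  have hmemP' : ∀ p : Nat.Primes, p ∈ P' ↔ (p : ℕ) ∈ r.primeFactors := by
    intro p
    constructor
    · intro hp
      rw [hP'def, Finset.mem_map] at hp
      obtain ⟨q, _, hq⟩ := hp
      rw [← hq]
      exact q.2
    · intro hp
      rw [hP'def, Finset.mem_map]
      exact ⟨⟨(p : ℕ), hp⟩, Finset.mem_attach _ _, Subtype.ext rfl⟩
  have hc1 : ∀ p : Nat.Primes, p ∉ P' → c p = 1 := by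
    intro p hp
    rw [hcdef]
    exact if_neg (fun h => hp ((hmemP' p).mpr h))
  have hCprod : HasProd c (∏ p ∈ P', c p) := hasProd_prod_of_ne_finset_one hc1
  have hzeta := (riemannZeta_eulerProduct_hasProd hs).pow_const k
  have hprodmul := hCprod.mul hzeta
  have hTeq : (fun p : Nat.Primes => c p * ((1 - ((p : ℕ) : ℂ) ^ (-s))⁻¹) ^ k)
      = fun p : Nat.Primes => ∑' e : ℕ, G ((p : ℕ) ^ e) := by
    funext p
    by_cases hp : (p : ℕ) ∈ r.primeFactors
    · rw [hcdef]
      simp only [if_pos hp, hFdef]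
      rw [mul_comm ((1 - ((p : ℕ) : ℂ) ^ (-s)) ^ k), mul_assoc, ← mul_pow,
        mul_inv_cancel₀ (h1x (p : ℕ) p.2), one_pow, mul_one]
    · rw [hcdef]
      simp only [if_neg hp]
      rw [one_mul, hTout (p : ℕ) p.2 hp]
  have hkey : HasProd (fun p : Nat.Primes => ∑' e : ℕ, G ((p : ℕ) ^ e))
      ((∏ p ∈ P', c p) * riemannZeta s ^ k) := by
    rw [← hTeq]
    exact hprodmul
  have hGsumval : ∑' n, G n = (∏ p ∈ P', c p) * riemannZeta s ^ k :=
    hEuler.unique hkey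
  -- product over P' equals product over primeFactors
  have hCF : ∏ p ∈ P', c p = ∏ p ∈ r.primeFactors, F p := by
    rw [hP'def, Finset.prod_map]
    rw [← Finset.prod_attach r.primeFactors F]
    refine Finset.prod_congr rfl fun q _ => ?_
    rw [hcdef]
    simp only [Function.Embedding.coeFn_mk]
    exact if_pos q.2
  -- gk = dk r * ∏ F
  have hDfac : (dk k r : ℂ) = ∏ p ∈ r.primeFactors, (dk k (p ^ r.factorization p) : ℂ) := by
    rw [← Nat.cast_prod]
    congr 1
    exact dk_eq_prod_superset k hr0 subset_rfl
  have hgk : gk k s r = (dk k r : ℂ) * ∏ p ∈ r.primeFactors, F p := by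
    rw [gk, hDfac, ← Finset.prod_mul_distrib]
    refine Finset.prod_congr rfl fun p hp => ?_
    have hpp : p.Prime := Nat.prime_of_mem_primeFactors hp
    have hdpα : (dk k (p ^ r.factorization p) : ℂ) ≠ 0 :=
      Nat.cast_ne_zero.mpr (dk_pos hk (pow_ne_zero _ hpp.pos.ne')).ne'
    have hsum_eq : ∑' j : ℕ, (dk k (p ^ (j + r.factorization p)) : ℂ) * (p : ℂ) ^ (-(j : ℂ) * s)
        = ∑' j : ℕ, (dk k (p ^ (j + r.factorization p)) : ℂ) * ((p : ℂ) ^ (-s)) ^ j := by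
      refine tsum_congr fun j => ?_
      congr 1
      rw [show -(j : ℂ) * s = (j : ℂ) * (-s) by ring, Complex.cpow_nat_mul]
    rw [hsum_eq, hFdef]
    simp only
    rw [hT p hpp]
    field_simp
    try ring
  -- conclude
  have htotal : ∑' n : ℕ, (dk k (r * n) : ℂ) * (n : ℂ) ^ (-s) = (dk k r : ℂ) * ∑' n, G n := by
    rw [hGdef, tsum_div_const]
    field_simp
  rw [htotal, hGsumval, hCF, hgk]
  try ring
end

section
/- Let q ≥ 1 and m be integers. Then e(m/q) = ∑_{d | m, d | q} φ(q/d)^{-1} ∑_{χ mod q/d} τ(χ̄) χ(m/d), where the inner sum is over all Dirichlet characters χ to the modulus q/d. -/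
/-! For `n ≠ 0` the Gauss sums diagonalise the additive character `a ↦ e(a/n)` on the units of
`ZMod n`: expanding `τ(χ̄)` and summing over `χ` first, orthogonality of Dirichlet characters
leaves `φ(n) e(a/n)` when `a` is a unit and `0` otherwise. In the divisor sum the term for `d` is
therefore `e(m/q)` written with modulus `q/d` when `m/d` is a unit mod `q/d`, i.e. when
`d = gcd(m, q)`, and vanishes for every other `d`. -/

open Complex

/-- `e(x) = e^{2πix}`. -/
noncomputable def e (x : ℝ) : ℂ := Complex.exp (2 * Real.pi * Complex.I * x)

/-- The Gauss sum `τ(χ) = ∑_{b mod n} χ(b) e(b/n)` of a Dirichlet character mod `n`. -/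
noncomputable def gaussTau {n : ℕ} (χ : DirichletCharacter ℂ n) : ℂ :=
  ∑ b ∈ Finset.range n, χ b * e ((b : ℝ) / (n : ℝ))

open Finset

lemma e_add_intCast (x : ℝ) (k : ℤ) : e (x + k) = e x := by
  rw [e, e, ofReal_add, mul_add, exp_add, ofReal_intCast, mul_comm _ (k : ℂ),
    exp_int_mul_two_pi_mul_I, mul_one]

section

variable {n : ℕ}

lemma e_intCast_div_eq_e_val_div [NeZero n] (a : ℤ) :
    e (a / n) = e ((a : ZMod n).val / n) := by
  have hn : (n : ℝ) ≠ 0 := Nat.cast_ne_zero.mpr (NeZero.ne n)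
  have hval : ((a : ZMod n).val : ℤ) + a / n * n = a := by
    rw [ZMod.val_intCast, mul_comm, Int.emod_add_mul_ediv]
  rw [← e_add_intCast ((a : ZMod n).val / n) (a / n), div_add' _ _ _ hn]
  congr 2
  exact_mod_cast hval.symm

lemma sum_gaussTau_star_mul_apply_eq_sum_range (a : ZMod n) :
    ∑ χ : DirichletCharacter ℂ n, gaussTau (χ.ringHomComp (starRingEnd ℂ)) * χ a =
      ∑ b ∈ range n, e (b / n) * ∑ χ : DirichletCharacter ℂ n, star (χ b) * χ a := by
  simp only [gaussTau, sum_mul, mul_sum, MulChar.ringHomComp_apply, starRingEnd_apply]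
  rw [sum_comm]
  exact sum_congr rfl fun b _ => sum_congr rfl fun χ _ => by ring

lemma sum_star_apply_mul_apply [NeZero n] (a b : ZMod n) :
    ∑ χ : DirichletCharacter ℂ n, star (χ b) * χ a =
      if IsUnit b ∧ b = a then (n.totient : ℂ) else 0 := by
  by_cases hb : IsUnit b
  · have hinv : ∀ χ : DirichletCharacter ℂ n, star (χ b) = χ b⁻¹ := fun χ => by
      rw [MulChar.star_apply', MulChar.inv_apply, ← hb.unit_spec, Ring.inverse_unit,
        ZMod.inv_coe_unit]
    simp only [hinv, DirichletCharacter.sum_char_inv_mul_char_eq ℂ hb, hb, true_and]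
  · rw [if_neg (by tauto)]
    exact sum_eq_zero fun χ _ => by rw [MulChar.map_nonunit χ hb, star_zero, zero_mul]

lemma sum_gaussTau_star_mul_apply [NeZero n] (a : ZMod n) :
    ∑ χ : DirichletCharacter ℂ n, gaussTau (χ.ringHomComp (starRingEnd ℂ)) * χ a =
      if IsUnit a then n.totient * e (a.val / n) else 0 := by
  have hval : ((a.val : ℕ) : ZMod n) = a := ZMod.natCast_zmod_val a
  simp only [sum_gaussTau_star_mul_apply_eq_sum_range, sum_star_apply_mul_apply, mul_ite, mul_zero]
  rw [sum_eq_single a.val]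
  · simp only [hval, and_true, mul_comm]
  · intro b hb hne
    rw [if_neg]
    rintro ⟨-, rfl⟩
    exact hne (ZMod.val_cast_of_lt (mem_range.mp hb)).symm
  · exact fun h => (h (mem_range.mpr (ZMod.val_lt a))).elim

lemma totient_inv_mul_sum_gaussTau_star_mul_intCast [NeZero n] (a : ℤ) :
    (n.totient : ℂ)⁻¹ *
        ∑ χ : DirichletCharacter ℂ n, gaussTau (χ.ringHomComp (starRingEnd ℂ)) * χ a =
      if IsUnit (a : ZMod n) then e (a / n) else 0 := by
  have htot : (n.totient : ℂ) ≠ 0 := by exact_mod_cast (Nat.totient_pos.mpr n.pos_of_neZero).ne'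
  rw [sum_gaussTau_star_mul_apply, e_intCast_div_eq_e_val_div, mul_ite, mul_zero,
    inv_mul_cancel_left₀ htot]

end

lemma isUnit_intCast_div_iff {q d : ℕ} {m : ℤ} (hq : q ≠ 0) (hdq : d ∣ q) (hdm : (d : ℤ) ∣ m) :
    IsUnit ((m / d : ℤ) : ZMod (q / d)) ↔ d = Int.gcd m q := by
  have hd : 0 < d := Nat.pos_of_dvd_of_pos hdq (Nat.pos_of_ne_zero hq)
  have hdg : d ∣ Int.gcd m q := Int.dvd_gcd hdm (Int.natCast_dvd_natCast.mpr hdq)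
  rw [ZMod.coe_int_isUnit_iff_isCoprime, isCoprime_comm, Int.isCoprime_iff_gcd_eq_one,
    Int.natCast_div, Int.gcd_div hdm (Int.natCast_dvd_natCast.mpr hdq), Int.natAbs_natCast,
    Nat.div_eq_iff_eq_mul_left hd hdg, one_mul, eq_comm]

/-- For integers `q ≥ 1` and `m`,
`e(m/q) = ∑_{d | m, d | q} φ(q/d)⁻¹ ∑_{χ mod q/d} τ(χ̄) χ(m/d)`. -/
theorem exp_div_eq_sum_characters (q : ℕ) (hq : 1 ≤ q) (m : ℤ) :
    e ((m : ℝ) / (q : ℝ)) =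
      ∑ d ∈ q.divisors.filter (fun d : ℕ => (d : ℤ) ∣ m),
        ((q / d).totient : ℂ)⁻¹ *
          ∑ χ : DirichletCharacter ℂ (q / d),
            gaussTau (χ.ringHomComp (starRingEnd ℂ)) * χ (((m / (d : ℤ)) : ℤ) : ZMod (q / d)) := by
  have hq0 : q ≠ 0 := Nat.one_le_iff_ne_zero.mp hq
  set g := Int.gcd m q
  have hgm : (g : ℤ) ∣ m := Int.gcd_dvd_left m q
  have hgq : g ∣ q := Int.natCast_dvd_natCast.mp (Int.gcd_dvd_right m q)
  have hg0 : g ≠ 0 := Nat.pos_iff_ne_zero.mp (Int.gcd_pos_of_ne_zero_right m (by exact_mod_cast hq0))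
  calc e (m / q)
      = e (((m / g : ℤ) : ℝ) / ((q / g : ℕ) : ℝ)) := by
        rw [Int.cast_div hgm (by exact_mod_cast hg0), Nat.cast_div hgq (by exact_mod_cast hg0),
          Int.cast_natCast, div_div_div_cancel_right₀ (by exact_mod_cast hg0)]
    _ = ∑ d ∈ q.divisors.filter (fun d : ℕ => (d : ℤ) ∣ m),
          if d = g then e (((m / d : ℤ) : ℝ) / ((q / d : ℕ) : ℝ)) else 0 := by
        rw [sum_ite_eq', if_pos (mem_filter.mpr ⟨Nat.mem_divisors.mpr ⟨hgq, hq0⟩, hgm⟩)]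
    _ = _ := by
        refine sum_congr rfl fun d hd => ?_
        obtain ⟨hd, hdm⟩ := mem_filter.mp hd
        have hdq := Nat.dvd_of_mem_divisors hd
        have : NeZero (q / d) :=
          ⟨(Nat.div_ne_zero_iff_of_dvd hdq).mpr ⟨hq0, (Nat.pos_of_mem_divisors hd).ne'⟩⟩
        rw [totient_inv_mul_sum_gaussTau_star_mul_intCast]
        exact if_congr (isUnit_intCast_div_iff hq0 hdq hdm).symm rfl rfl
end

section
/- Let k ≥ 2 be an integer and let x be real with 0 < x < 1. For each integer α ≥ 0 set G(α) = (1 - x)^{k-1} ∑_{j=0}^∞ C(k-2+α+j, α+j) x^j. Then ∑_{α=0}^∞ x^α ( G(α)² - x² G(α+1)² ) = (1 - x)^{2k-1} ∑_{α=0}^∞ C(k-1+α, α)² x^α, all series converging absolutely. (Taking x = 1/p at each prime p, this identity shows that ∏_p (1 - 1/p)^{(k-1)²} ∑_{α=0}^∞ p^{-α} ( G_k(1, p^α)² - p^{-2} G_k(1, p^{α+1})² ) = a_k, i.e. H*_k(0,0,0) = a_k.) -/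
namespace LFIaux

/-- `c r m = C(m+r, r) = C(r+m, m)` as a real number. -/
def c (r m : ℕ) : ℝ := ((m + r).choose r : ℝ)

lemma c_cast (r m : ℕ) : ((r + m).choose m : ℝ) = c r m := by
  rw [Nat.add_comm r m, Nat.choose_symm_add]; rfl

lemma c_nonneg (r m : ℕ) : 0 ≤ c r m := Nat.cast_nonneg _

lemma c_split (r m : ℕ) : c (r + 1) m = c r m + ((m + r).choose (r + 1) : ℝ) := by
  have h : (m + (r + 1)).choose (r + 1) = (m + r).choose r + (m + r).choose (r + 1) :=
    Nat.choose_succ_succ' (m + r) r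
  unfold c
  rw [h]
  push_cast
  ring

lemma w_succ (r m : ℕ) : (((m + 1) + r).choose (r + 1) : ℝ) = c (r + 1) m := by
  rw [show m + 1 + r = m + (r + 1) by omega]; rfl

lemma w_zero (r : ℕ) : (((0:ℕ) + r).choose (r + 1) : ℝ) = 0 := by
  rw [Nat.choose_eq_zero_of_lt (by omega)]; norm_num

lemma c_le (r m : ℕ) : c r m ≤ c (r + 1) m := by
  rw [c_split]
  have : (0:ℝ) ≤ ((m + r).choose (r + 1) : ℝ) := Nat.cast_nonneg _
  linarith

lemma hockey (r m : ℕ) : ∑ α ∈ Finset.range (m + 1), c r α = c (r + 1) m := by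
  unfold c
  rw [← Nat.cast_sum]
  norm_cast
  exact Nat.sum_range_add_choose m r

variable {x : ℝ}

lemma summable_poly (hx0 : 0 < x) (hx1 : x < 1) (d : ℕ) :
    Summable (fun m : ℕ => ((m : ℝ) + 1) ^ d * x ^ m) := by
  have hxn : ‖x‖ < 1 := by rw [Real.norm_eq_abs, abs_of_pos hx0]; exact hx1
  have h0 : Summable (fun n : ℕ => (n : ℝ) ^ d * x ^ n) :=
    summable_pow_mul_geometric_of_norm_lt_one d hxn
  have h1 : Summable (fun m : ℕ => ((m + 1 : ℕ) : ℝ) ^ d * x ^ (m + 1)) :=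
    (summable_nat_add_iff 1).2 h0
  have h2 := h1.mul_left x⁻¹
  apply h2.congr
  intro m
  have hx : x ≠ 0 := hx0.ne'
  push_cast
  rw [pow_succ]
  field_simp

lemma summable_cc (hx0 : 0 < x) (hx1 : x < 1) (d e : ℕ) :
    Summable (fun m : ℕ => c d m * c e m * x ^ m) := by
  have hb : ∀ m : ℕ, c d m * c e m ≤ ((d:ℝ) + 1) ^ d * ((e:ℝ) + 1) ^ e * ((m:ℝ) + 1) ^ (d + e) := by
    intro m
    have key : ∀ s : ℕ, c s m ≤ ((s:ℝ) + 1) ^ s * ((m:ℝ) + 1) ^ s := by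
      intro s
      have h1 : (m + s).choose s ≤ (m + s) ^ s := Nat.choose_le_pow (m + s) s
      have h2 : (m + s) ^ s ≤ ((s + 1) * (m + 1)) ^ s := by
        apply Nat.pow_le_pow_left; nlinarith
      have := h1.trans h2
      unfold c
      calc ((m + s).choose s : ℝ) ≤ (((s + 1) * (m + 1)) ^ s : ℕ) := by exact_mod_cast this
        _ = ((s:ℝ) + 1) ^ s * ((m:ℝ) + 1) ^ s := by push_cast; rw [mul_pow]
    calc c d m * c e m ≤ (((d:ℝ) + 1) ^ d * ((m:ℝ) + 1) ^ d) * (((e:ℝ) + 1) ^ e * ((m:ℝ) + 1) ^ e) :=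
          mul_le_mul (key d) (key e) (c_nonneg e m)
            (by have : (0:ℝ) ≤ (d:ℝ) := Nat.cast_nonneg d
                have : (0:ℝ) ≤ (m:ℝ) := Nat.cast_nonneg m
                positivity)
      _ = ((d:ℝ) + 1) ^ d * ((e:ℝ) + 1) ^ e * ((m:ℝ) + 1) ^ (d + e) := by
          rw [pow_add]; ring
  have hs := (summable_poly hx0 hx1 (d + e)).mul_left (((d:ℝ) + 1) ^ d * ((e:ℝ) + 1) ^ e)
  apply Summable.of_nonneg_of_le (fun m => mul_nonneg (mul_nonneg (c_nonneg d m) (c_nonneg e m)) (pow_pos hx0 m).le) _ hs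
  intro m
  have hxm : (0:ℝ) ≤ x ^ m := by positivity
  calc c d m * c e m * x ^ m
      ≤ (((d:ℝ) + 1) ^ d * ((e:ℝ) + 1) ^ e * ((m:ℝ) + 1) ^ (d + e)) * x ^ m :=
        mul_le_mul_of_nonneg_right (hb m) hxm
    _ = ((d:ℝ) + 1) ^ d * ((e:ℝ) + 1) ^ e * (((m:ℝ) + 1) ^ (d + e) * x ^ m) := by ring

lemma summable_c (hx0 : 0 < x) (hx1 : x < 1) (r : ℕ) :
    Summable (fun m : ℕ => c r m * x ^ m) := by
  have hxn : ‖x‖ < 1 := by rw [Real.norm_eq_abs, abs_of_pos hx0]; exact hx1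
  exact (summable_choose_mul_geometric_of_norm_lt_one r hxn).congr (fun m => rfl)

end LFIaux

open LFIaux in
/-- For `k ≥ 2`, `0 < x < 1`, and
`G(α) = (1-x)^{k-1} ∑_{j≥0} C(k-2+α+j, α+j) x^j`, one has
`∑_{α≥0} x^α (G(α)² - x² G(α+1)²) = (1-x)^{2k-1} ∑_{α≥0} C(k-1+α, α)² x^α`,
all series converging absolutely. -/
theorem local_factor_identity (k : ℕ) (hk : 2 ≤ k) (x : ℝ) (hx0 : 0 < x) (hx1 : x < 1) :
    (∀ α : ℕ, Summable (fun j : ℕ => ((k - 2 + α + j).choose (α + j) : ℝ) * x ^ j)) ∧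
    Summable (fun α : ℕ =>
      x ^ α * (((1 - x) ^ (k - 1) * ∑' j : ℕ, ((k - 2 + α + j).choose (α + j) : ℝ) * x ^ j) ^ 2 -
        x ^ 2 * ((1 - x) ^ (k - 1) *
          ∑' j : ℕ, ((k - 2 + (α + 1) + j).choose ((α + 1) + j) : ℝ) * x ^ j) ^ 2)) ∧
    Summable (fun α : ℕ => ((k - 1 + α).choose α : ℝ) ^ 2 * x ^ α) ∧
    (∑' α : ℕ,
      x ^ α * (((1 - x) ^ (k - 1) * ∑' j : ℕ, ((k - 2 + α + j).choose (α + j) : ℝ) * x ^ j) ^ 2 -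
        x ^ 2 * ((1 - x) ^ (k - 1) *
          ∑' j : ℕ, ((k - 2 + (α + 1) + j).choose ((α + 1) + j) : ℝ) * x ^ j) ^ 2)) =
      (1 - x) ^ (2 * k - 1) * ∑' α : ℕ, ((k - 1 + α).choose α : ℝ) ^ 2 * x ^ α := by
  obtain ⟨r, rfl⟩ : ∃ r, k = r + 2 := ⟨k - 2, by omega⟩
  have e1 : r + 2 - 1 = r + 1 := by omega
  have e2 : r + 2 - 2 = r := by omega
  have e3 : 2 * (r + 2) - 1 = 2 * r + 3 := by omega
  have eassoc : ∀ a bb : ℕ, r + a + bb = r + (a + bb) := fun a bb => Nat.add_assoc r a bb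
  have hbα : ∀ α : ℕ, ((r + (1 + α)).choose α : ℝ) = c (r + 1) α := by
    intro α
    rw [show r + (1 + α) = α + (r + 1) by omega, Nat.choose_symm_add]
    rfl
  simp only [e1, e2, e3, eassoc, c_cast, hbα]
  have hxm : ∀ m : ℕ, (0 : ℝ) < x ^ m := fun m => pow_pos hx0 m
  have hsumc : Summable fun m : ℕ => c r m * x ^ m := summable_c hx0 hx1 r
  have hTt : ∀ α : ℕ, Summable fun j : ℕ => c r (α + j) * x ^ (α + j) := by
    intro α
    exact ((summable_nat_add_iff α).2 hsumc).congr fun j => by rw [Nat.add_comm j α]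
  have hSj : ∀ α : ℕ, Summable fun j : ℕ => c r (α + j) * x ^ j := by
    intro α
    have h2 := (hTt α).mul_left (x ^ α)⁻¹
    apply h2.congr
    intro j
    have hxa : x ^ α ≠ 0 := (hxm α).ne'
    rw [pow_add]
    field_simp
  have hrec : ∀ α : ℕ, (∑' j : ℕ, c r (α + j) * x ^ j)
      = c r α + x * ∑' j : ℕ, c r (α + 1 + j) * x ^ j := by
    intro α
    rw [Summable.tsum_eq_zero_add (hSj α), ← tsum_mul_left]
    congr 1
    · simp
    · exact tsum_congr fun j => by
        rw [show α + (j + 1) = α + 1 + j by omega, pow_succ]; ring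
  have hTteq : ∀ α : ℕ, (∑' j : ℕ, c r (α + j) * x ^ (α + j))
      = x ^ α * ∑' j : ℕ, c r (α + j) * x ^ j := by
    intro α
    rw [← tsum_mul_left]
    exact tsum_congr fun j => by rw [pow_add]; ring
  -- Fubini setup
  set f : ℕ × ℕ → ℝ := fun p => if p.2 ≤ p.1 then c r p.2 * (c r p.1 * x ^ p.1) else 0 with hf
  have hf_nonneg : ∀ p : ℕ × ℕ, 0 ≤ f p := by
    intro p; rw [hf]; dsimp only; split
    · exact mul_nonneg (c_nonneg _ _) (mul_nonneg (c_nonneg _ _) (hxm _).le)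
    · exact le_refl 0
  have hout : ∀ m : ℕ, ∀ α ∉ Finset.range (m + 1), f (m, α) = 0 := by
    intro m α hα; rw [hf]; dsimp only
    rw [if_neg]; simp only [Finset.mem_range] at hα; omega
  have hfib : ∀ m : ℕ, ∑' α : ℕ, f (m, α) = c (r + 1) m * (c r m * x ^ m) := by
    intro m
    rw [tsum_eq_sum (hout m), ← hockey r m, Finset.sum_mul]
    apply Finset.sum_congr rfl
    intro α hα
    rw [hf]; dsimp only
    rw [if_pos]; simp only [Finset.mem_range] at hα; omega
  have hsum_bc : Summable fun m : ℕ => c (r + 1) m * (c r m * x ^ m) :=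
    (summable_cc hx0 hx1 (r + 1) r).congr fun m => by ring
  have hf_slice : ∀ m : ℕ, Summable fun α : ℕ => f (m, α) :=
    fun m => summable_of_ne_finset_zero (hout m)
  have hf_summ : Summable f :=
    (summable_prod_of_nonneg hf_nonneg).2
      ⟨hf_slice, (hsum_bc.congr fun m => (hfib m).symm)⟩
  have htsum1 : ∑' p : ℕ × ℕ, f p = ∑' m : ℕ, c (r + 1) m * (c r m * x ^ m) := by
    rw [Summable.tsum_prod' hf_summ hf_slice]
    exact tsum_congr hfib
  have hcol_sum : ∀ α : ℕ, Summable fun m : ℕ => f (m, α) :=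
    fun α => (hf_summ.prod_symm.prod_factor α).congr fun m => rfl
  have hcol : ∀ α : ℕ, ∑' m : ℕ, f (m, α) = c r α * ∑' j : ℕ, c r (α + j) * x ^ (α + j) := by
    intro α
    rw [← Summable.sum_add_tsum_nat_add α (hcol_sum α)]
    have h0 : ∑ i ∈ Finset.range α, f (i, α) = 0 := by
      apply Finset.sum_eq_zero; intro i hi
      rw [hf]; dsimp only
      rw [if_neg]; simp only [Finset.mem_range] at hi; omega
    rw [h0, zero_add, ← tsum_mul_left]
    apply tsum_congr; intro m
    rw [hf]; dsimp only
    rw [if_pos (Nat.le_add_left α m), Nat.add_comm m α]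
  have hswap_summ : Summable fun p : ℕ × ℕ => f p.swap := hf_summ.prod_symm
  have hcolsum : Summable fun α : ℕ => c r α * ∑' j : ℕ, c r (α + j) * x ^ (α + j) := by
    have h := ((summable_prod_of_nonneg (fun p => hf_nonneg p.swap)).1 hswap_summ).2
    exact h.congr fun α => hcol α
  have htsum2 : (∑' α : ℕ, c r α * ∑' j : ℕ, c r (α + j) * x ^ (α + j))
      = ∑' m : ℕ, c (r + 1) m * (c r m * x ^ m) := by
    rw [← htsum1]
    calc (∑' α : ℕ, c r α * ∑' j : ℕ, c r (α + j) * x ^ (α + j))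
        = ∑' α : ℕ, ∑' m : ℕ, f (m, α) := tsum_congr fun α => (hcol α).symm
      _ = ∑' p : ℕ × ℕ, f p.swap := (Summable.tsum_prod' hswap_summ (fun α => (hswap_summ.prod_factor α))).symm
      _ = ∑' p : ℕ × ℕ, f p := (Equiv.prodComm ℕ ℕ).tsum_eq f
  -- telescoping
  have hsum_bb : Summable fun m : ℕ => c (r + 1) m ^ 2 * x ^ m :=
    (summable_cc hx0 hx1 (r + 1) (r + 1)).congr fun m => by ring
  have hsum_ccx : Summable fun m : ℕ => c r m ^ 2 * x ^ m :=
    (summable_cc hx0 hx1 r r).congr fun m => by ring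
  have hw_nonneg : ∀ m : ℕ, (0 : ℝ) ≤ ((m + r).choose (r + 1) : ℝ) := fun m => Nat.cast_nonneg _
  have hsum_ww : Summable fun m : ℕ => ((m + r).choose (r + 1) : ℝ) ^ 2 * x ^ m := by
    apply Summable.of_nonneg_of_le _ _ hsum_bb
    · intro m; positivity
    · intro m
      have h1 : ((m + r).choose (r + 1) : ℝ) ≤ c (r + 1) m := by
        have := c_split r m; have := c_nonneg r m; linarith
      have h2 : ((m + r).choose (r + 1) : ℝ) ^ 2 ≤ c (r + 1) m ^ 2 := by
        nlinarith [hw_nonneg m]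
      exact mul_le_mul_of_nonneg_right h2 (hxm m).le
  have htel : (∑' m : ℕ, (2 * c (r + 1) m * c r m - c r m ^ 2) * x ^ m)
      = (1 - x) * ∑' m : ℕ, c (r + 1) m ^ 2 * x ^ m := by
    have hterm : ∀ m : ℕ, (2 * c (r + 1) m * c r m - c r m ^ 2) * x ^ m
        = c (r + 1) m ^ 2 * x ^ m - ((m + r).choose (r + 1) : ℝ) ^ 2 * x ^ m := by
      intro m
      have h := c_split r m
      have hc : c r m = c (r + 1) m - ((m + r).choose (r + 1) : ℝ) := by linarith
      rw [hc]; ring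
    rw [tsum_congr hterm, Summable.tsum_sub hsum_bb hsum_ww]
    have hww : (∑' m : ℕ, ((m + r).choose (r + 1) : ℝ) ^ 2 * x ^ m)
        = x * ∑' m : ℕ, c (r + 1) m ^ 2 * x ^ m := by
      rw [Summable.tsum_eq_zero_add hsum_ww, ← tsum_mul_left, w_zero]
      simp only [pow_zero, mul_one, ne_eq, OfNat.ofNat_ne_zero, not_false_eq_true, zero_pow,
        zero_add]
      apply tsum_congr; intro m
      rw [w_succ, pow_succ]; ring
    rw [hww]; ring
  -- main per-term identity
  have hmain : ∀ α : ℕ,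
      x ^ α * (((1 - x) ^ (r + 1) * ∑' j : ℕ, c r (α + j) * x ^ j) ^ 2
        - x ^ 2 * ((1 - x) ^ (r + 1) * ∑' j : ℕ, c r (α + 1 + j) * x ^ j) ^ 2)
      = (1 - x) ^ (2 * r + 2) *
          (2 * (c r α * ∑' j : ℕ, c r (α + j) * x ^ (α + j)) - c r α ^ 2 * x ^ α) := by
    intro α
    rw [hTteq α, hrec α, show 2 * r + 2 = (r + 1) * 2 by ring, pow_mul]
    ring
  refine ⟨hSj, ?_, ?_, ?_⟩
  · apply Summable.congr _ (fun α => (hmain α).symm)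
    exact (((hcolsum.mul_left 2).sub hsum_ccx).mul_left _)
  · exact hsum_bb
  · rw [tsum_congr hmain, tsum_mul_left,
      Summable.tsum_sub (hcolsum.mul_left 2) hsum_ccx, tsum_mul_left, htsum2]
    have hcomb : (2 * (∑' m : ℕ, c (r + 1) m * (c r m * x ^ m)) - ∑' m : ℕ, c r m ^ 2 * x ^ m)
        = ∑' m : ℕ, (2 * c (r + 1) m * c r m - c r m ^ 2) * x ^ m := by
      rw [tsum_congr (f := fun m : ℕ => (2 * c (r + 1) m * c r m - c r m ^ 2) * x ^ m)
        (g := fun m : ℕ => 2 * (c (r + 1) m * (c r m * x ^ m)) - c r m ^ 2 * x ^ m)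
        (fun m => by ring), Summable.tsum_sub (hsum_bc.mul_left 2) hsum_ccx, tsum_mul_left]
    rw [hcomb, htel]
    ring
end

section
/- For every integer k ≥ 1, the double contour integral (1/(2πi))² ∮_{|s|=1/16} ∮_{|w|=1/16} (1-s)^k (1-w)^k / ( (1-s-w) s^k w^k ) dw ds (both circles positively oriented) equals ∑_{i=1}^k ∑_{j=1}^k (-1)^{i+j} C(k,i) C(k,j) C(i+j-2, i-1), and this double sum equals k. -/
/-!
Fix `s` on the circle and put `a = 1 - s`, which lies outside the disk. Writing
`1 / ((a - w) w^(k+1)) = a⁻¹ (1 / w^(k+1) + 1 / ((a - w) w^k))` and using Cauchy's theorem for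
`k = 0`, induction on `k` gives `a^k ∮ p(w) / ((a - w) w^k) dw = 2πi ∑_{j<k} p_j a^j` for every
polynomial `p`. For `p = (1 - w)^k` the truncated sum is `s^k - (s - 1)^k`, so the inner integral
is `2πi (s^k - (s - 1)^k) / s^k`, and the outer integral picks out the coefficient `k` of
`s^(k-1)` in `s^k - (s - 1)^k`.

The double sum is evaluated on its own: for fixed `i`, the sum over `j` is the alternating sum
`∑ (-1)^j C(k,j) C(i-2+j, i-1)`, a `k`-th forward difference of a polynomial of degree
`i - 1 < k`, so it vanishes apart from the missing `j = 0` term.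
-/

open Complex Real Polynomial Metric Finset

theorem sum_range_coeff_one_sub_X_pow_mul_pow {A : Type*} [CommRing A] (k : ℕ) (a : A) :
    ∑ j ∈ range k, ((1 - X : A[X]) ^ k).coeff j * a ^ j = (1 - a) ^ k - (-a) ^ k := by
  have hdeg : ((1 - X : A[X]) ^ k).natDegree < k + 1 := Nat.lt_succ_of_le (by compute_degree)
  have htop : ((1 - X : A[X]) ^ k).coeff k = (-1) ^ k := by
    have h1 : (1 - X : A[X]).natDegree ≤ 1 := by compute_degree
    simpa [coeff_one] using coeff_pow_of_natDegree_le (m := k) h1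
  have heval := eval_eq_sum_range' hdeg a
  rw [sum_range_succ, htop] at heval
  simp only [eval_pow, eval_sub, eval_one, eval_X] at heval
  rw [heval, neg_pow]
  ring

section CircleIntegral

variable {R : ℝ}

namespace circleIntegral

theorem integral_zpow (hR : R ≠ 0) (n : ℤ) :
    (∮ z in C(0, R), z ^ n) = if n = -1 then 2 * π * I else 0 := by
  split_ifs with hn
  · simpa [hn, zpow_neg_one] using integral_sub_center_inv 0 hR
  · simpa using integral_sub_zpow_of_ne hn 0 0 R

theorem integral_eval_div_pow_succ (hR : 0 < R) (p : ℂ[X]) (n : ℕ) :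
    (∮ z in C(0, R), p.eval z / z ^ (n + 1)) = 2 * π * I * p.coeff n := by
  have hz0 : ∀ z ∈ sphere (0 : ℂ) R, z ≠ 0 := fun z hz h => by simp [h, hR.ne] at hz
  induction p using Polynomial.induction_on' with
  | add p q hp hq =>
    have hint : ∀ p : ℂ[X], CircleIntegrable (fun z => p.eval z / z ^ (n + 1)) 0 R := fun p =>
      ContinuousOn.circleIntegrable hR.le <|
        (Polynomial.continuousOn _).div (continuousOn_pow _) fun z hz => pow_ne_zero _ (hz0 z hz)
    simp only [eval_add, add_div, coeff_add, mul_add]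
    rw [integral_add (hint p) (hint q), hp, hq]
  | monomial m c =>
    have h : Set.EqOn (fun z => (monomial m c).eval z / z ^ (n + 1))
        (fun z => c * z ^ ((m : ℤ) - (n + 1))) (sphere 0 R) := fun z hz => by
      dsimp only
      rw [eval_monomial, ← Nat.cast_succ, zpow_sub₀ (hz0 z hz), zpow_natCast, zpow_natCast,
        mul_div_assoc]
    rw [integral_congr hR.le h, integral_const_mul, integral_zpow hR.ne', coeff_monomial]
    by_cases hm : m = n
    · simp [hm, mul_comm]
    · simp [hm, show (m : ℤ) - (n + 1) ≠ -1 by omega]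

theorem integral_eval_div_sub_mul_pow (hR : 0 < R) {a : ℂ} (ha : R < ‖a‖) (p : ℂ[X]) (k : ℕ) :
    a ^ k * (∮ z in C(0, R), p.eval z / ((a - z) * z ^ k)) =
      2 * π * I * ∑ j ∈ range k, p.coeff j * a ^ j := by
  have hz0 : ∀ z ∈ sphere (0 : ℂ) R, z ≠ 0 := fun z hz h => by simp [h, hR.ne] at hz
  have hza : ∀ z ∈ closedBall (0 : ℂ) R, a - z ≠ 0 := fun z hz h => by
    rw [sub_eq_zero.1 h] at ha
    exact ha.not_ge (mem_closedBall_zero_iff.1 hz)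
  have ha0 : a ≠ 0 := norm_pos_iff.1 (hR.trans ha)
  induction k with
  | zero =>
    simp only [pow_zero, mul_one, one_mul, range_zero, sum_empty, mul_zero]
    refine DiffContOnCl.circleIntegral_eq_zero hR.le (DifferentiableOn.diffContOnCl ?_)
    rw [closure_ball 0 hR.ne']
    exact p.differentiable.differentiableOn.div
      ((differentiableOn_const a).sub differentiableOn_id) hza
  | succ k ih =>
    have h : Set.EqOn (fun z => p.eval z / ((a - z) * z ^ (k + 1)))
        (fun z => a⁻¹ * (p.eval z / z ^ (k + 1) + p.eval z / ((a - z) * z ^ k)))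
        (sphere 0 R) := fun z hz => by
      have := hza z (sphere_subset_closedBall hz)
      have := hz0 z hz
      field_simp
      ring
    have hint₁ : CircleIntegrable (fun z => p.eval z / z ^ (k + 1)) 0 R :=
      ContinuousOn.circleIntegrable hR.le <|
        (Polynomial.continuousOn _).div (continuousOn_pow _) fun z hz => pow_ne_zero _ (hz0 z hz)
    have hint₂ : CircleIntegrable (fun z => p.eval z / ((a - z) * z ^ k)) 0 R :=
      ContinuousOn.circleIntegrable hR.le <|
        (Polynomial.continuousOn _).div (by fun_prop) fun z hz =>
          mul_ne_zero (hza z (sphere_subset_closedBall hz)) (pow_ne_zero _ (hz0 z hz))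
    rw [integral_congr hR.le h, integral_const_mul, integral_add hint₁ hint₂,
      integral_eval_div_pow_succ hR, sum_range_succ, mul_add (2 * π * I : ℂ), ← ih]
    field_simp
    ring

end circleIntegral

open circleIntegral

theorem circleIntegral_one_sub_pow_mul_div (hR : 0 < R) {s : ℂ} (h1s : R < ‖1 - s‖) (k : ℕ) :
    (∮ w in C(0, R), (1 - s) ^ k * (1 - w) ^ k / ((1 - s - w) * s ^ k * w ^ k)) =
      2 * π * I * (s ^ k - (s - 1) ^ k) / s ^ k := by
  have hpole := integral_eval_div_sub_mul_pow hR h1s ((1 - X) ^ k) k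
  simp only [eval_pow, eval_sub, eval_one, eval_X, sum_range_coeff_one_sub_X_pow_mul_pow] at hpole
  calc (∮ w in C(0, R), (1 - s) ^ k * (1 - w) ^ k / ((1 - s - w) * s ^ k * w ^ k))
      = ∮ w in C(0, R), (1 - s) ^ k / s ^ k * ((1 - w) ^ k / ((1 - s - w) * w ^ k)) := by
        congr 1; ext w; rw [div_mul_div_comm]; ring
    _ = (1 - s) ^ k * (∮ w in C(0, R), (1 - w) ^ k / ((1 - s - w) * w ^ k)) / s ^ k := by
        rw [integral_const_mul, div_mul_eq_mul_div]
    _ = 2 * π * I * (s ^ k - (s - 1) ^ k) / s ^ k := by rw [hpole]; ring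

theorem circleIntegral_circleIntegral_one_sub_pow_mul_div (hR : 0 < R) (hR2 : R < 1 / 2) (k : ℕ) :
    (∮ s in C(0, R), ∮ w in C(0, R),
      (1 - s) ^ k * (1 - w) ^ k / ((1 - s - w) * s ^ k * w ^ k)) = (2 * π * I) ^ 2 * k := by
  have hinner : Set.EqOn
      (fun s => ∮ w in C(0, R), (1 - s) ^ k * (1 - w) ^ k / ((1 - s - w) * s ^ k * w ^ k))
      (fun s => 2 * π * I * ((X ^ k - (X - 1) ^ k : ℂ[X]).eval s / s ^ k)) (sphere 0 R) :=
    fun s hs => by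
      have h1s : R < ‖1 - s‖ := by
        have := norm_sub_norm_le 1 s
        rw [mem_sphere_zero_iff_norm.1 hs, norm_one] at this
        linarith
      simp only [circleIntegral_one_sub_pow_mul_div hR h1s, eval_sub, eval_pow, eval_X, eval_one]
      ring
  rw [integral_congr hR.le hinner, integral_const_mul]
  cases k with
  | zero => simp [circleIntegral]
  | succ n =>
    rw [integral_eval_div_pow_succ hR, coeff_sub, coeff_X_pow, sub_eq_add_neg X, ← C_1, ← C_neg,
      coeff_X_add_C_pow, if_neg (by omega), Nat.add_sub_cancel_left, pow_one,
      Nat.choose_succ_self_right]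
    push_cast
    ring

end CircleIntegral

section AlternatingSums

theorem fwdDiff_iter_choose_eq_zero_of_lt {b n : ℕ} (h : b < n) :
    (fwdDiff 1)^[n] (fun x ↦ x.choose b : ℕ → ℤ) = 0 := by
  obtain ⟨m, rfl⟩ := Nat.exists_eq_add_of_lt h
  have hb : (fwdDiff 1)^[b] (fun x ↦ x.choose b : ℕ → ℤ) = fun _ ↦ 1 := by
    simpa using fwdDiff_iter_choose 0 b
  rw [show b + m + 1 = m + 1 + b by ring, Function.iterate_add_apply, hb,
    Function.iterate_succ_apply, fwdDiff_const]
  exact Function.iterate_fixed (fwdDiff_const 1 0) m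

theorem alternating_sum_choose_mul_choose_add {b n : ℕ} (h : b < n) (a : ℕ) :
    ∑ j ∈ range (n + 1), (-1 : ℤ) ^ j * n.choose j * (a + j).choose b = 0 := by
  have hΔ := fwdDiff_iter_eq_sum_shift 1 (fun x ↦ x.choose b : ℕ → ℤ) n a
  rw [fwdDiff_iter_choose_eq_zero_of_lt h, Pi.zero_apply] at hΔ
  rw [← mul_right_inj' (pow_ne_zero n (neg_ne_zero.2 one_ne_zero)), mul_zero, hΔ, mul_sum]
  refine sum_congr rfl fun j hj => ?_
  have hjn : j ≤ n := Nat.lt_succ_iff.1 (mem_range.1 hj)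
  have hsign : (-1 : ℤ) ^ n * (-1) ^ j = (-1) ^ (n - j) := by
    rw [← pow_add, show n + j = n - j + 2 * j by omega, pow_add, pow_mul]
    simp
  simp only [smul_eq_mul, mul_one, ← hsign]
  ring

theorem sum_Icc_neg_one_pow_mul_choose_mul_choose {i k : ℕ} (hi : i ∈ Icc 1 k) :
    ∑ j ∈ Icc 1 k, (-1 : ℤ) ^ j * k.choose j * (i + j - 2).choose (i - 1) =
      if i = 1 then -1 else 0 := by
  obtain ⟨hi1, hik⟩ := mem_Icc.1 hi
  have hfull := alternating_sum_choose_mul_choose_add (show i - 1 < k by omega) (i - 2)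
  rw [sum_range_eq_add_Ico _ (by omega : 0 < k + 1), Finset.Ico_add_one_right_eq_Icc] at hfull
  rcases (show i = 1 ∨ 2 ≤ i by omega) with rfl | hi2
  · simp only [tsub_self, Nat.choose_zero_right, Nat.cast_one, mul_one, pow_zero, if_pos] at hfull ⊢
    linarith
  · have hshift : ∀ j, i + j - 2 = i - 2 + j := fun j => by omega
    simp_rw [if_neg (show i ≠ 1 by omega), hshift]
    simpa [Nat.choose_eq_zero_of_lt (show i - 2 < i - 1 by omega)] using hfull

theorem sum_Icc_sum_Icc_neg_one_pow_mul_choose_mul_choose (k : ℕ) :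
    ∑ i ∈ Icc 1 k, ∑ j ∈ Icc 1 k,
      (-1 : ℤ) ^ (i + j) * k.choose i * k.choose j * (i + j - 2).choose (i - 1) = k := by
  have hrow : ∀ i ∈ Icc 1 k, ∑ j ∈ Icc 1 k,
      (-1 : ℤ) ^ (i + j) * k.choose i * k.choose j * (i + j - 2).choose (i - 1) =
        if i = 1 then (k : ℤ) else 0 := fun i hi => by
    have hfactor : (if i = 1 then (k : ℤ) else 0) =
        (-1) ^ i * k.choose i * (if i = 1 then -1 else 0) := by
      split_ifs with h <;> simp [h]
    rw [hfactor, ← sum_Icc_neg_one_pow_mul_choose_mul_choose hi, mul_sum]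
    exact sum_congr rfl fun j _ => by ring
  rw [sum_congr rfl hrow, sum_ite_eq']
  split_ifs with h
  · rfl
  · obtain rfl : k = 0 := by simpa using h
    rfl

end AlternatingSums

theorem double_contour_integral_eq_k_general (k : ℕ) :
    ((2 * Real.pi * Complex.I)⁻¹) ^ 2 *
        (∮ s in C(0, 1 / 16), ∮ w in C(0, 1 / 16),
          (1 - s) ^ k * (1 - w) ^ k / ((1 - s - w) * s ^ k * w ^ k)) =
      ∑ i ∈ Finset.Icc 1 k, ∑ j ∈ Finset.Icc 1 k,
        (-1 : ℂ) ^ (i + j) * (k.choose i : ℂ) * (k.choose j : ℂ) *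
          ((i + j - 2).choose (i - 1) : ℂ) ∧
    (∑ i ∈ Finset.Icc 1 k, ∑ j ∈ Finset.Icc 1 k,
        (-1 : ℂ) ^ (i + j) * (k.choose i : ℂ) * (k.choose j : ℂ) *
          ((i + j - 2).choose (i - 1) : ℂ)) = (k : ℂ) := by
  have hsum : ∑ i ∈ Finset.Icc 1 k, ∑ j ∈ Finset.Icc 1 k,
      (-1 : ℂ) ^ (i + j) * (k.choose i : ℂ) * (k.choose j : ℂ) *
        ((i + j - 2).choose (i - 1) : ℂ) = k := by
    exact_mod_cast sum_Icc_sum_Icc_neg_one_pow_mul_choose_mul_choose k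
  refine ⟨?_, hsum⟩
  rw [hsum, circleIntegral_circleIntegral_one_sub_pow_mul_div (by norm_num) (by norm_num),
    ← mul_assoc, ← mul_pow, inv_mul_cancel₀ two_pi_I_ne_zero, one_pow, one_mul]

/-- The double contour integral
`(1/2πi)² ∮∮_{|s|=|w|=1/16} (1-s)^k (1-w)^k / ((1-s-w) s^k w^k) dw ds`
equals `∑_{i=1}^k ∑_{j=1}^k (-1)^{i+j} C(k,i) C(k,j) C(i+j-2, i-1)`, which equals `k`. -/
theorem double_contour_integral_eq_k (k : ℕ) (hk : 1 ≤ k) :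
    ((2 * Real.pi * Complex.I)⁻¹) ^ 2 *
        (∮ s in C(0, 1 / 16), ∮ w in C(0, 1 / 16),
          (1 - s) ^ k * (1 - w) ^ k / ((1 - s - w) * s ^ k * w ^ k)) =
      ∑ i ∈ Finset.Icc 1 k, ∑ j ∈ Finset.Icc 1 k,
        (-1 : ℂ) ^ (i + j) * (k.choose i : ℂ) * (k.choose j : ℂ) *
          ((i + j - 2).choose (i - 1) : ℂ) ∧
    (∑ i ∈ Finset.Icc 1 k, ∑ j ∈ Finset.Icc 1 k,
        (-1 : ℂ) ^ (i + j) * (k.choose i : ℂ) * (k.choose j : ℂ) *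
          ((i + j - 2).choose (i - 1) : ℂ)) = (k : ℂ) :=
  double_contour_integral_eq_k_general k
end

section
/- Define w_3(η) by the general formula w_k(η) = (1+η)^{k²} ( 1 - ∑_{n=0}^{k²-1} C(k², n+1) γ_k(n) (1 - (1+η)^{-(n+1)}) ) with k = 3. Then for every real η with η ≠ -1 and η ≠ 2, w_3(η) + w_3(1-η) = 42. -/
/-- `γ_k(0) = k` and, for `n ≥ 1`,
`γ_k(n) = (-1)^n ∑_{i=1}^k ∑_{j=1}^k C(k,i) C(k,j) (n-1)!/((i-1)!(j-1)!(n-i-j+1)!)`,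
terms with `n - i - j + 1 < 0` being zero. -/
noncomputable def gammaCG (k n : ℕ) : ℝ :=
  if n = 0 then (k : ℝ)
  else (-1 : ℝ) ^ n * ∑ i ∈ Finset.Icc 1 k, ∑ j ∈ Finset.Icc 1 k,
    (k.choose i : ℝ) * (k.choose j : ℝ) *
      (if i + j ≤ n + 1 then
        ((n - 1).factorial : ℝ) /
          (((i - 1).factorial : ℝ) * ((j - 1).factorial : ℝ) * ((n + 1 - i - j).factorial : ℝ))
      else 0)

/-- The weight function
`w_k(η) = (1+η)^{k²} (1 - ∑_{n=0}^{k²-1} C(k², n+1) γ_k(n) (1 - (1+η)^{-(n+1)}))`. -/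
noncomputable def wCG (k : ℕ) (η : ℝ) : ℝ :=
  (1 + η) ^ (k ^ 2) *
    (1 - ∑ n ∈ Finset.range (k ^ 2),
      ((k ^ 2).choose (n + 1) : ℝ) * gammaCG k n * (1 - (1 + η) ^ (-(n + 1 : ℤ))))

lemma gamma3_0 : gammaCG 3 0 = 3 := by
  norm_num [gammaCG, show Finset.Icc 1 3 = {1,2,3} from rfl, Nat.factorial]

lemma gamma3_1 : gammaCG 3 1 = -9 := by
  norm_num [gammaCG, show Finset.Icc 1 3 = {1,2,3} from rfl, Nat.factorial]

lemma gamma3_2 : gammaCG 3 2 = 27 := by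
  norm_num [gammaCG, show Finset.Icc 1 3 = {1,2,3} from rfl, Nat.factorial]

lemma gamma3_3 : gammaCG 3 3 = -69 := by
  norm_num [gammaCG, show Finset.Icc 1 3 = {1,2,3} from rfl, Nat.factorial]

lemma gamma3_4 : gammaCG 3 4 = 153 := by
  norm_num [gammaCG, show Finset.Icc 1 3 = {1,2,3} from rfl, Nat.factorial]

lemma gamma3_5 : gammaCG 3 5 = -303 := by
  norm_num [gammaCG, show Finset.Icc 1 3 = {1,2,3} from rfl, Nat.factorial]

lemma gamma3_6 : gammaCG 3 6 = 549 := by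
  norm_num [gammaCG, show Finset.Icc 1 3 = {1,2,3} from rfl, Nat.factorial]

lemma gamma3_7 : gammaCG 3 7 = -927 := by
  norm_num [gammaCG, show Finset.Icc 1 3 = {1,2,3} from rfl, Nat.factorial]

lemma gamma3_8 : gammaCG 3 8 = 1479 := by
  norm_num [gammaCG, show Finset.Icc 1 3 = {1,2,3} from rfl, Nat.factorial]


lemma wCG3_poly (η : ℝ) (h : (1:ℝ) + η ≠ 0) :
    wCG 3 η = 1 + 9*η + 36*η^2 + 84*η^3 + 126*η^4 - 630*η^5 + 588*η^6
      - 180*η^7 + 9*η^8 - 2*η^9 := by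
  have e : ∀ m : ℕ, m ≤ 8 → (1 + η) ^ (-(m + 1 : ℤ)) = ((1+η)^9)⁻¹ * (1+η)^(8-m) := by
    intro m hm
    have h9 : (1+η)^(m+1) * (1+η)^(8-m) = (1+η)^9 := by
      rw [← pow_add]; congr 1; omega
    rw [zpow_neg, show ((m : ℤ) + 1) = ((m+1 : ℕ) : ℤ) by push_cast; ring,
      zpow_natCast, ← h9, mul_inv, mul_assoc, inv_mul_cancel₀ (pow_ne_zero _ h), mul_one]
  have hu : (1+η)^9 * ((1+η)^9)⁻¹ = 1 := mul_inv_cancel₀ (pow_ne_zero _ h)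
  simp only [wCG, show (3:ℕ)^2 = 9 from rfl, Finset.sum_range_succ, Finset.sum_range_zero,
    gamma3_0, gamma3_1, gamma3_2, gamma3_3, gamma3_4, gamma3_5, gamma3_6, gamma3_7, gamma3_8,
    e 0 (by norm_num), e 1 (by norm_num), e 2 (by norm_num), e 3 (by norm_num),
    e 4 (by norm_num), e 5 (by norm_num), e 6 (by norm_num), e 7 (by norm_num),
    e 8 (by norm_num)]
  norm_num [Nat.choose]
  field_simp
  ring

/-- `w_3(η) + w_3(1-η) = 42` for all real `η` with `η ≠ -1` and `η ≠ 2`. -/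
theorem w_three_add_w_three_eq_42 (η : ℝ) (hη : η ≠ -1) (hη' : η ≠ 2) :
    wCG 3 η + wCG 3 (1 - η) = 42 := by
  have h1 : (1 : ℝ) + η ≠ 0 := fun h => hη (by linarith)
  have h2 : (1 : ℝ) + (1 - η) ≠ 0 := fun h => hη' (by linarith)
  rw [wCG3_poly η h1, wCG3_poly (1 - η) h2]
  ring
end
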